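/- arXiv:1103.5654 — 5 statements merged into one kernel-verified Lean document; each statement's English description precedes it below -/
import Mathlib

section
/- If the edge set of a 3-partite 3-uniform hypergraph H' forms an intersecting family (every two edges share a vertex), then the minimum vertex degree δ_1(H') is at most 1. -/
/-!
Suppose every vertex has degree at least two. The edges chosen through the class-0 vertices
pairwise meet outside class 0, and a family of pairs that pairwise agree in one coordinate is
constant in one coordinate; so these edges form a star through a vertex `v` of class `j`.
Every edge avoiding `v` meets all edges of the star in the remaining class `k`, hence all such
edges share their class-`k` vertex `w`. Two distinct edges through one vertex `u ≠ v` of class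
`j` therefore differ in class 0, and an edge through a class-`k` vertex other than `w` must
contain `v` and meet both of them in class 0, which is impossible.
-/

def deg3 {n : ℕ} (H : Finset (Fin 3 → Fin n)) (c : Fin 3) (x : Fin n) : ℕ :=
  (H.filter (fun e => e c = x)).card

lemma Fin.eq_or_eq_or_eq_of_three {i j k : Fin 3} (hij : i ≠ j) (hik : i ≠ k) (hjk : j ≠ k)
    (l : Fin 3) : l = i ∨ l = j ∨ l = k := by
  revert i j k l
  decide

section ThreePartite

variable {α : Type*}

lemma apply_eq_of_apply_ne_of_apply_ne {e f : Fin 3 → α} {i j k : Fin 3} (hij : i ≠ j)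
    (hik : i ≠ k) (hjk : j ≠ k) (hef : ∃ l, e l = f l) (hi : e i ≠ f i) (hj : e j ≠ f j) :
    e k = f k := by
  obtain ⟨l, hl⟩ := hef
  rcases Fin.eq_or_eq_or_eq_of_three hij hik hjk l with rfl | rfl | rfl <;> tauto

lemma eq_of_apply_eq_of_apply_eq {e f : Fin 3 → α} {i j k : Fin 3} (hij : i ≠ j)
    (hik : i ≠ k) (hjk : j ≠ k) (hi : e i = f i) (hj : e j = f j) (hk : e k = f k) :
    e = f := by
  funext l
  rcases Fin.eq_or_eq_or_eq_of_three hij hik hjk l with rfl | rfl | rfl <;> assumption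

lemma forall_eq_or_forall_eq_of_forall_eq_or_eq {ι β γ : Type*} {a : ι → β} {b : ι → γ}
    (h : ∀ x y, a x = a y ∨ b x = b y) : (∀ x y, a x = a y) ∨ ∀ x y, b x = b y := by
  by_cases ha : ∀ x y, a x = a y
  · exact Or.inl ha
  push Not at ha
  obtain ⟨x, y, hxy⟩ := ha
  have hb : b x = b y := (h x y).resolve_left hxy
  suffices hz : ∀ z, b z = b x from Or.inr fun z z' => (hz z).trans (hz z').symm
  intro z
  by_cases hzx : a z = a x
  · exact ((h z y).resolve_left (hzx ▸ hxy)).trans hb.symm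
  · exact (h z x).resolve_left hzx

/-- `E` is a star: one edge through each vertex of class `i`, all containing `v` in class `j`.
Two edges avoiding `v` both meet the star edge through a class-`i` vertex they both miss, and
can only do so in class `k`. -/
lemma apply_eq_of_apply_ne_star {H : Set (Fin 3 → α)} (hH : ∀ e ∈ H, ∀ f ∈ H, ∃ l, e l = f l)
    {i j k : Fin 3} (hij : i ≠ j) (hik : i ≠ k) (hjk : j ≠ k) (hα : 3 ≤ ENat.card α)
    {E : α → Fin 3 → α} (hEH : ∀ x, E x ∈ H) (hEi : ∀ x, E x i = x) {v : α}
    (hEj : ∀ x, E x j = v) {g g' : Fin 3 → α} (hg : g ∈ H) (hg' : g' ∈ H) (hgj : g j ≠ v)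
    (hg'j : g' j ≠ v) : g k = g' k := by
  obtain ⟨x, hxg, hxg'⟩ := ENat.exists_ne_ne_of_three_le hα (g i) (g' i)
  have through (f : Fin 3 → α) (hf : f ∈ H) (hfi : x ≠ f i) (hfj : f j ≠ v) : E x k = f k :=
    apply_eq_of_apply_ne_of_apply_ne hij hik hjk (hH _ (hEH x) f hf) (by rwa [hEi])
      (by rw [hEj]; exact hfj.symm)
  exact (through g hg hxg hgj).symm.trans (through g' hg' hxg' hg'j)

lemma false_of_star {H : Set (Fin 3 → α)} (hH : ∀ e ∈ H, ∀ f ∈ H, ∃ l, e l = f l)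
    {i j k : Fin 3} (hij : i ≠ j) (hik : i ≠ k) (hjk : j ≠ k) (hα : 3 ≤ ENat.card α)
    {E : α → Fin 3 → α} (hEH : ∀ x, E x ∈ H) (hEi : ∀ x, E x i = x) {v : α}
    (hEj : ∀ x, E x j = v) (hdeg_j : ∀ u, ∃ g₁ ∈ H, ∃ g₂ ∈ H, g₁ ≠ g₂ ∧ g₁ j = u ∧ g₂ j = u)
    (hdeg_k : ∀ w, ∃ g ∈ H, g k = w) : False := by
  have avoid {g g' : Fin 3 → α} (hg : g ∈ H) (hg' : g' ∈ H) :=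
    apply_eq_of_apply_ne_star hH hij hik hjk hα hEH hEi hEj hg hg'
  obtain ⟨u, hu, -⟩ := ENat.exists_ne_ne_of_three_le hα v v
  obtain ⟨g₁, hg₁, g₂, hg₂, hne, hg₁j, hg₂j⟩ := hdeg_j u
  have hk : g₁ k = g₂ k := avoid hg₁ hg₂ (hg₁j ▸ hu) (hg₂j ▸ hu)
  have hi : g₁ i ≠ g₂ i := fun h =>
    hne (eq_of_apply_eq_of_apply_eq hij hik hjk h (hg₁j.trans hg₂j.symm) hk)
  obtain ⟨w, hw, -⟩ := ENat.exists_ne_ne_of_three_le hα (g₁ k) (g₁ k)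
  obtain ⟨g, hg, hgk⟩ := hdeg_k w
  have hgj : g j = v := by
    by_contra hgj
    exact hw (hgk ▸ avoid hg hg₁ hgj (hg₁j ▸ hu))
  have meet_i (f : Fin 3 → α) (hf : f ∈ H) (hfj : f j = u) (hfk : f k = g₁ k) : g i = f i :=
    apply_eq_of_apply_ne_of_apply_ne hjk hij.symm hik.symm (hH g hg f hf)
      (by rw [hgj, hfj]; exact hu.symm) (by rw [hgk, hfk]; exact hw)
  exact hi ((meet_i g₁ hg₁ hg₁j rfl).symm.trans (meet_i g₂ hg₂ hg₂j hk.symm))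

end ThreePartite

lemma exists_pair_of_one_lt_deg3 {n : ℕ} {H : Finset (Fin 3 → Fin n)} {c : Fin 3} {x : Fin n}
    (h : 1 < deg3 H c x) : ∃ g₁ ∈ H, ∃ g₂ ∈ H, g₁ ≠ g₂ ∧ g₁ c = x ∧ g₂ c = x := by
  obtain ⟨g₁, hg₁, g₂, hg₂, hne⟩ := Finset.one_lt_card.mp h
  rw [Finset.mem_filter] at hg₁ hg₂
  exact ⟨g₁, hg₁.1, g₂, hg₂.1, hne, hg₁.2, hg₂.2⟩

/-- If the edge set of a 3-partite 3-graph is an intersecting family, then the minimum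
vertex degree is at most 1, i.e. some vertex lies in at most one edge. -/
theorem min_degree_of_intersecting {n : ℕ} (hn : 5 ≤ n)
    (H : Finset (Fin 3 → Fin n))
    (hint : ∀ e ∈ H, ∀ f ∈ H, ∃ i, e i = f i) :
    ∃ (c : Fin 3) (x : Fin n), deg3 H c x ≤ 1 := by
  by_contra! hlow
  have hpair c x := exists_pair_of_one_lt_deg3 (hlow c x)
  have hedge (c : Fin 3) (x : Fin n) : ∃ e ∈ H, e c = x := by
    obtain ⟨g, hg, -, -, -, hgx, -⟩ := hpair c x
    exact ⟨g, hg, hgx⟩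
  have hα : 3 ≤ ENat.card (Fin n) := by
    rw [ENat.card_eq_coe_fintype_card, Fintype.card_fin]
    exact_mod_cast (by omega : 3 ≤ n)
  choose E hEH hE0 using hedge 0
  have hstar (x y : Fin n) : E x 1 = E y 1 ∨ E x 2 = E y 2 := by
    rcases eq_or_ne x y with rfl | hxy
    · exact Or.inl rfl
    refine or_iff_not_imp_left.2 fun h1 => apply_eq_of_apply_ne_of_apply_ne (i := 0)
      (by decide) (by decide) (by decide) (hint _ (hEH x) _ (hEH y)) ?_ h1
    rwa [hE0, hE0]
  let x₀ : Fin n := ⟨0, by omega⟩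
  rcases forall_eq_or_forall_eq_of_forall_eq_or_eq hstar with h1 | h2
  · exact false_of_star (H := ↑H) hint (k := 2) (by decide) (by decide) (by decide) hα hEH hE0
      (fun x => h1 x x₀) (hpair 1) (hedge 2)
  · exact false_of_star (H := ↑H) hint (k := 1) (by decide) (by decide) (by decide) hα hEH hE0
      (fun x => h2 x x₀) (hpair 2) (hedge 1)
end

section
/- For integers k ≥ 2 and d_1,...,d_k with 0 ≤ d_i ≤ n, the k-partite k-graph H(n; d_1,...,d_k) contains a matching of size min{n, d_1 + d_2 + ... + d_k}. -/
/-- `H(n; d_1,…,d_k)`: the `k`-partite `k`-graph (edges encoded as functions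
`Fin k → Fin n`, one vertex per class) whose edges are the legal `k`-sets meeting
`W = W_1 ∪ ⋯ ∪ W_k`, where `W_i` consists of the first `d i` vertices of class `i`. -/
def Hnd (k n : ℕ) (d : Fin k → ℕ) : Finset (Fin k → Fin n) :=
  Finset.univ.filter (fun e => ∃ i : Fin k, (e i : ℕ) < d i)

/-!
Split the first `min n (d₁ + ⋯ + dₖ)` integers into consecutive blocks of lengths
`d₁, …, dₖ`, the block `t` starting at `Dₜ = d₁ + ⋯ + d_{t-1}`, and let edge `j` have
vertex `j - Dᵢ (mod n)` in class `i`. Each coordinate is a translate of `j ↦ j mod n`,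
so distinct edges are disjoint, and if `j` lies in block `t` then its vertex in class `t`
is `j - Dₜ < dₜ`, i.e. lies in `Wₜ`.
-/

open Finset Fin.NatCast

namespace Fin

variable {n : ℕ} [NeZero n]

lemma natCast_sub_injOn (c : Fin n) : Set.InjOn (fun j : ℕ => (j : Fin n) - c) (Set.Iio n) := by
  intro a ha b hb hab
  have h := congrArg Fin.val (sub_left_inj.mp hab)
  rwa [val_cast_of_lt ha, val_cast_of_lt hb] at h

lemma val_natCast_sub_natCast {a b : ℕ} (hba : b ≤ a) (ha : a < n) :
    ((a : Fin n) - b).val = a - b := by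
  have hb : b < n := hba.trans_lt ha
  have hle : (b : Fin n) ≤ a := by rwa [le_def, val_cast_of_lt ha, val_cast_of_lt hb]
  rw [sub_val_of_le hle, val_cast_of_lt ha, val_cast_of_lt hb]

end Fin

section CyclicMatching

variable {k n : ℕ}

def blockStart (d : Fin k → ℕ) (t : Fin k) : ℕ := ∑ i : Fin t, d (Fin.castLE t.isLt.le i)

lemma exists_blockStart_le_lt (d : Fin k → ℕ) {j : ℕ} (hj : j < ∑ i, d i) :
    ∃ t, blockStart d t ≤ j ∧ j < blockStart d t + d t := by
  obtain ⟨⟨t, r⟩, hr⟩ := finSigmaFinEquiv.surjective (⟨j, hj⟩ : Fin (∑ i, d i))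
  have hj : blockStart d t + r = j := by
    simpa [blockStart] using congrArg Fin.val hr
  exact ⟨t, by omega, by omega⟩

variable [NeZero n]

def cyclicEdge (d : Fin k → ℕ) (j : ℕ) : Fin k → Fin n := fun i => (j : Fin n) - blockStart d i

lemma cyclicEdge_mem_Hnd (d : Fin k → ℕ) {j : ℕ} (hjn : j < n) (hjd : j < ∑ i, d i) :
    cyclicEdge d j ∈ Hnd k n d := by
  obtain ⟨t, hle, hlt⟩ := exists_blockStart_le_lt d hjd
  refine mem_filter.mpr ⟨mem_univ _, t, ?_⟩
  rw [cyclicEdge, Fin.val_natCast_sub_natCast hle hjn]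
  omega

lemma cyclicEdge_apply_injOn (d : Fin k → ℕ) (i : Fin k) :
    Set.InjOn (fun j => cyclicEdge (n := n) d j i) (Set.Iio n) :=
  Fin.natCast_sub_injOn _

end CyclicMatching

theorem Hnd_matching_general (k n : ℕ) (d : Fin k → ℕ) :
    ∃ M : Finset (Fin k → Fin n), M ⊆ Hnd k n d ∧
      (∀ e ∈ M, ∀ f ∈ M, e ≠ f → ∀ i, e i ≠ f i) ∧
      M.card = min n (∑ i, d i) := by
  rcases Nat.eq_zero_or_pos n with rfl | hn
  · exact ⟨∅, by simp, by simp, by simp⟩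
  have : NeZero n := ⟨hn.ne'⟩
  have hlt_n {j} (hj : j ∈ range (min n (∑ i, d i))) : j < n :=
    (mem_range.mp hj).trans_le (min_le_left _ _)
  have hmem {j} (hj : j ∈ range (min n (∑ i, d i))) : cyclicEdge d j ∈ Hnd k n d :=
    cyclicEdge_mem_Hnd d (hlt_n hj) ((mem_range.mp hj).trans_le (min_le_right _ _))
  refine ⟨(range (min n (∑ i, d i))).image (cyclicEdge d), ?_, ?_, ?_⟩
  · simpa only [image_subset_iff] using fun j hj => hmem hj
  · simp only [mem_image]
    rintro _ ⟨a, ha, rfl⟩ _ ⟨b, hb, rfl⟩ hab i h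
    exact hab (congrArg _ (cyclicEdge_apply_injOn d i (hlt_n ha) (hlt_n hb) h))
  · rw [card_image_of_injOn, card_range]
    intro a ha b hb hab
    -- an edge of `Hnd k n d` has some coordinate `i`, so `k ≠ 0` and edges can be compared there
    obtain ⟨i, -⟩ := (mem_filter.mp (hmem ha)).2
    exact cyclicEdge_apply_injOn d i (hlt_n ha) (hlt_n hb) (congrFun hab i)

/-- For `k ≥ 2` and `0 ≤ d_i ≤ n`, the graph `H(n; d_1,…,d_k)` contains a matching of
size `min {n, d_1 + ⋯ + d_k}`. -/
theorem Hnd_matching (k n : ℕ) (d : Fin k → ℕ) (hk : 2 ≤ k) (hd : ∀ i, d i ≤ n) :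
    ∃ M : Finset (Fin k → Fin n), M ⊆ Hnd k n d ∧
      (∀ e ∈ M, ∀ f ∈ M, e ≠ f → ∀ i, e i ≠ f i) ∧
      M.card = min n (∑ i, d i) :=
  Hnd_matching_general k n d
end

section
/- Let H be a k-partite k-graph with n vertices in each class whose largest matching has size m. If v is a vertex such that H minus v still contains a matching of size m, then deg(v) ≤ n^{k-1} − (n−m)^{k-1}. -/
/-- `M` is a matching in the `k`-partite `k`-graph `H` (edges encoded as functions
`Fin k → Fin n`, one vertex per class): a set of pairwise vertex-disjoint edges. -/
def IsMatching {k n : ℕ} (H M : Finset (Fin k → Fin n)) : Prop :=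
  M ⊆ H ∧ ∀ e ∈ M, ∀ f ∈ M, e ≠ f → ∀ i, e i ≠ f i

/-- The degree of the vertex `x` in class `c`. -/
def degV {k n : ℕ} (H : Finset (Fin k → Fin n)) (c : Fin k) (x : Fin n) : ℕ :=
  (H.filter (fun e => e c = x)).card

/-!
Take a maximum matching `M` avoiding `x`. An edge through `x` that missed every vertex of `M`
could be added to `M`, so every edge through `x` meets `V(M)` in some class `i ≠ c`. Among the
`n^(k-1)` potential edges through `x`, those avoiding `V(M)` choose each of their other
`k - 1` vertices outside the at most `m` vertices of `M` in that class, so there are at least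
`(n-m)^(k-1)` of them, and none of them lies in `H`.
-/

open Finset Function

section PiFinsetUpdate

variable {ι α : Type*} [Fintype ι] [DecidableEq ι]

theorem mem_piFinset_update_singleton {T : ι → Finset α} {c : ι} {x : α} {e : ι → α} :
    e ∈ Fintype.piFinset (update T c {x}) ↔ e c = x ∧ ∀ i ≠ c, e i ∈ T i := by
  rw [Fintype.mem_piFinset, forall_update_iff T (fun i t => e i ∈ t), mem_singleton]

theorem card_piFinset_update_singleton (T : ι → Finset α) (c : ι) (x : α) :
    #(Fintype.piFinset (update T c {x})) = ∏ i ∈ univ.erase c, #(T i) := by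
  rw [Fintype.card_piFinset, ← prod_erase_mul _ _ (mem_univ c), update_self, card_singleton,
    mul_one]
  exact prod_congr rfl fun i hi => by rw [update_of_ne (ne_of_mem_erase hi)]

theorem pow_le_card_piFinset_update_singleton {a : ℕ} (T : ι → Finset α) (c : ι) (x : α)
    (hT : ∀ i ≠ c, a ≤ #(T i)) :
    a ^ (Fintype.card ι - 1) ≤ #(Fintype.piFinset (update T c {x})) := by
  rw [card_piFinset_update_singleton, ← card_univ, ← card_erase_of_mem (mem_univ c)]
  exact pow_card_le_prod _ _ _ fun i hi => hT i (ne_of_mem_erase hi)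

theorem card_piFinset_update_univ_singleton [Fintype α] (c : ι) (x : α) :
    #(Fintype.piFinset (update (fun _ => (univ : Finset α)) c {x})) =
      Fintype.card α ^ (Fintype.card ι - 1) := by
  rw [card_piFinset_update_singleton, prod_const, card_erase_of_mem (mem_univ c), card_univ,
    card_univ]

theorem card_filter_apply_eq_le_of_exists_notMem [Fintype α] [DecidableEq α]
    (s : Finset (ι → α)) (c : ι) (x : α) (T : ι → Finset α) {a : ℕ} (hT : ∀ i ≠ c, a ≤ #(T i))
    (hs : ∀ e ∈ s, e c = x → ∃ i ≠ c, e i ∉ T i) :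
    #(s.filter (· c = x)) ≤ Fintype.card α ^ (Fintype.card ι - 1) - a ^ (Fintype.card ι - 1) := by
  set link := Fintype.piFinset (update (fun _ => (univ : Finset α)) c {x})
  set box := Fintype.piFinset (update T c {x})
  have hbox : box ⊆ link := fun e he =>
    mem_piFinset_update_singleton.2 ⟨(mem_piFinset_update_singleton.1 he).1, fun _ _ => mem_univ _⟩
  have hs_sub : s.filter (· c = x) ⊆ link \ box := fun e he => by
    obtain ⟨he, hec⟩ := mem_filter.1 he
    obtain ⟨i, hic, hi⟩ := hs e he hec
    simp only [mem_sdiff, link, box, mem_piFinset_update_singleton, not_and, not_forall]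
    exact ⟨⟨hec, fun _ _ => mem_univ _⟩, fun _ => ⟨i, hic, hi⟩⟩
  calc #(s.filter (· c = x)) ≤ #(link \ box) := card_le_card hs_sub
    _ = #link - #box := card_sdiff_of_subset hbox
    _ ≤ _ := by
      rw [card_piFinset_update_univ_singleton]
      exact Nat.sub_le_sub_left (pow_le_card_piFinset_update_singleton T c x hT) _

end PiFinsetUpdate

section Matching

variable {k n : ℕ} {H M : Finset (Fin k → Fin n)} {e : Fin k → Fin n}

theorem IsMatching.insert (hM : IsMatching H M) (he : e ∈ H)
    (hdisj : ∀ f ∈ M, ∀ i, e i ≠ f i) : IsMatching H (insert e M) := by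
  refine ⟨insert_subset he hM.1, ?_⟩
  simp only [mem_insert]
  rintro f (rfl | hf) g (rfl | hg) hfg i
  · exact absurd rfl hfg
  · exact hdisj g hg i
  · exact (hdisj f hf i).symm
  · exact hM.2 f hf g hg hfg i

theorem IsMatching.exists_apply_mem_image_of_maximum (hM : IsMatching H M)
    (hmax : ∀ M', IsMatching H M' → #M' ≤ #M) (he : e ∈ H) (heM : e ∉ M) :
    ∃ i, e i ∈ M.image (· i) := by
  by_contra! hfree
  have := hmax _ (hM.insert he fun f hf i hfi => hfree i (hfi ▸ mem_image_of_mem _ hf))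
  rw [card_insert_of_notMem heM] at this
  omega

theorem IsMatching.exists_ne_apply_mem_image_of_maximum (hM : IsMatching H M)
    (hmax : ∀ M', IsMatching H M' → #M' ≤ #M) {c : Fin k} {x : Fin n}
    (hMx : ∀ f ∈ M, f c ≠ x) (he : e ∈ H) (hec : e c = x) :
    ∃ i ≠ c, e i ∈ M.image (· i) := by
  obtain ⟨i, hi⟩ := hM.exists_apply_mem_image_of_maximum hmax he fun heM => hMx e heM hec
  refine ⟨i, ?_, hi⟩
  rintro rfl
  obtain ⟨f, hf, hfe⟩ := mem_image.1 hi
  exact hMx f hf (hfe.trans hec)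

end Matching

/-- If the largest matching in a `k`-partite `k`-graph `H` with `n` vertices in each
class has size `m`, and `H` minus the vertex `x` of class `c` still has a matching of
size `m`, then `deg(x) ≤ n^(k-1) − (n−m)^(k-1)`. -/
theorem degree_bound_of_removable (k n m : ℕ) (H : Finset (Fin k → Fin n))
    (hmax : (∃ M, IsMatching H M ∧ M.card = m) ∧
      ∀ M, IsMatching H M → M.card ≤ m)
    (c : Fin k) (x : Fin n)
    (hv : ∃ M, IsMatching H M ∧ M.card = m ∧ ∀ e ∈ M, e c ≠ x) :
    degV H c x ≤ n ^ (k - 1) - (n - m) ^ (k - 1) := by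
  obtain ⟨M, hM, rfl, hMx⟩ := hv
  have hbox (i : Fin k) : n - #M ≤ #(M.image (· i))ᶜ := by
    rw [card_compl, Fintype.card_fin]
    exact Nat.sub_le_sub_left card_image_le n
  have hedges (e) (he : e ∈ H) (hec : e c = x) : ∃ i ≠ c, e i ∉ (M.image (· i))ᶜ := by
    simpa only [mem_compl, not_not] using
      hM.exists_ne_apply_mem_image_of_maximum hmax.2 hMx he hec
  simpa only [degV, Fintype.card_fin] using
    card_filter_apply_eq_le_of_exists_notMem H c x _ (fun i _ => hbox i) hedges
end

section
/- For every integer n ≥ 2 and 1 ≤ m ≤ n, the k-partite k-graph H*_k(n;m) contains no matching of size greater than m. -/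
/-!
An edge of `H*_k(n;m)` either lies in `H_k(n;m-1)`, i.e. meets the vertex set
`W = W_1 ∪ ⋯ ∪ W_k`, or agrees with `u` in more than half of its coordinates. Disjoint edges of
the first kind meet `W` in distinct vertices, and `|W| ≤ m - 1`; two edges of the second kind
would share a coordinate of `u`, so there is at most one of them.
-/

/-- `H_k(n;m)`: the `k`-partite `k`-graph (edges encoded as functions `Fin k → Fin n`)
whose edges are the legal `k`-sets meeting `W = W_1 ∪ ⋯ ∪ W_k`, where `W_i` consists of
the first `⌊(m+i-1)/k⌋` vertices of class `i` (indexing by `j = i-1 : Fin k`). -/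
def Hk (k n m : ℕ) : Finset (Fin k → Fin n) :=
  Finset.univ.filter (fun e => ∃ i : Fin k, (e i : ℕ) < (m + (i : ℕ)) / k)

/-- `H*_k(n;m)`: obtained from `H_k(n;m-1)` by fixing vertices `u i ∈ U_i` and adding
all legal `k`-sets `T` with `|T ∩ {u 1,…,u k}| > k/2`. -/
def HstarK (k n m : ℕ) (u : Fin k → Fin n) : Finset (Fin k → Fin n) :=
  Hk k n (m - 1) ∪
    Finset.univ.filter (fun e =>
      k < 2 * (Finset.univ.filter (fun i : Fin k => e i = u i)).card)

open Finset

section PartiteMatching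

variable {ι α : Type*}

theorem card_le_card_of_forall_exists_apply_mem (M : Finset (ι → α)) (W : Finset (ι × α))
    (hM : (M : Set (ι → α)).Pairwise fun e f => ∀ i, e i ≠ f i)
    (hW : ∀ e ∈ M, ∃ i, (i, e i) ∈ W) : #M ≤ #W := by
  refine card_le_card_of_forall_subsingleton (fun (e : ι → α) (p : ι × α) => e p.1 = p.2)
    (fun e he => ?_) ?_
  · obtain ⟨i, hi⟩ := hW e he
    exact ⟨(i, e i), hi, rfl⟩
  · rintro ⟨i, x⟩ - e ⟨he, hei⟩ f ⟨hf, hfi⟩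
    by_contra hef
    exact hM he hf hef i (hei.trans hfi.symm)

theorem card_le_one_of_lt_two_mul_card_agree [Fintype ι] [DecidableEq α] (u : ι → α)
    (M : Finset (ι → α)) (hM : (M : Set (ι → α)).Pairwise fun e f => ∀ i, e i ≠ f i)
    (hu : ∀ e ∈ M, Fintype.card ι < 2 * #{i | e i = u i}) : #M ≤ 1 := by
  classical
  refine card_le_one.mpr fun e he f hf => ?_
  by_contra hef
  have hcard : #(univ : Finset ι) < #{i | e i = u i} + #{i | f i = u i} := by
    have := hu e he
    have := hu f hf
    rw [card_univ]
    omega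
  obtain ⟨i, hi⟩ := inter_nonempty_of_card_lt_card_add_card (subset_univ _) (subset_univ _) hcard
  simp only [mem_inter, mem_filter, mem_univ, true_and] at hi
  exact hM he hf hef i (hi.1.trans hi.2.symm)

end PartiteMatching

theorem card_filter_lt_add_div_le (k n m : ℕ) :
    #{p : Fin k × Fin n | (p.2 : ℕ) < (m + p.1) / k} ≤ m := by
  -- `(i, v) ↦ k v + (k - 1 - i)` enumerates these pairs as an initial segment of `ℕ`.
  calc _ ≤ #(range m) := card_le_card_of_injOn (fun p => k * p.2 + (k - 1 - p.1)) ?_ ?_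
    _ = m := card_range m
  · rintro ⟨i, v⟩ hp
    have hk : 0 < k := i.pos
    simp only [coe_filter, mem_univ, true_and, Set.mem_ofPred_eq, Nat.lt_div_iff_mul_lt hk] at hp
    simp only [coe_range, Set.mem_Iio]
    have hi := i.isLt
    rw [mul_comm] at hp
    omega
  · rintro ⟨i, v⟩ - ⟨j, w⟩ - h
    have hk : 0 < k := i.pos
    have hi := i.isLt
    have hj := j.isLt
    have hvw : (v : ℕ) = w := by
      simpa [Nat.mul_add_div hk, Nat.div_eq_of_lt (by omega : k - 1 - i < k),
        Nat.div_eq_of_lt (by omega : k - 1 - j < k)] using congrArg (· / k) h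
    simp only [hvw, add_right_inj] at h
    simp only [Prod.mk.injEq, Fin.ext_iff]
    omega

theorem HstarK_no_large_matching_general (k n m : ℕ) (hm1 : 1 ≤ m) (u : Fin k → Fin n)
    (M : Finset (Fin k → Fin n)) (hM : M ⊆ HstarK k n m u)
    (hdisj : ∀ e ∈ M, ∀ f ∈ M, e ≠ f → ∀ i, e i ≠ f i) :
    M.card ≤ m := by
  have hW : #(M ∩ Hk k n (m - 1)) ≤ m - 1 := by
    refine (card_le_card_of_forall_exists_apply_mem _ _
      (Set.Pairwise.mono (coe_subset.mpr inter_subset_left) hdisj) fun e he => ?_).trans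
      (card_filter_lt_add_div_le k n (m - 1))
    simpa [Hk] using (mem_inter.mp he).2
  have hmaj : #(M \ Hk k n (m - 1)) ≤ 1 := by
    refine card_le_one_of_lt_two_mul_card_agree u _
      (Set.Pairwise.mono (coe_subset.mpr sdiff_subset) hdisj) fun e he => ?_
    obtain ⟨heM, heW⟩ := mem_sdiff.mp he
    simpa [HstarK, heW] using hM heM
  have := card_inter_add_card_sdiff M (Hk k n (m - 1))
  omega

/-- For `n ≥ 2` and `1 ≤ m ≤ n`, the `k`-partite `k`-graph `H*_k(n;m)` contains no
matching of size greater than `m`. -/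
theorem HstarK_no_large_matching (k n m : ℕ) (hk : 2 ≤ k) (hn : 2 ≤ n)
    (hm1 : 1 ≤ m) (hmn : m ≤ n) (u : Fin k → Fin n)
    (hu : ∀ i : Fin k, ((m - 1) + (i : ℕ)) / k ≤ (u i : ℕ))
    (M : Finset (Fin k → Fin n)) (hM : M ⊆ HstarK k n m u)
    (hdisj : ∀ e ∈ M, ∀ f ∈ M, e ≠ f → ∀ i, e i ≠ f i) :
    M.card ≤ m :=
  HstarK_no_large_matching_general k n m hm1 u M hM hdisj
end

section
/- Let H be a 3-partite 3-graph with n vertices in each class such that every vertex of H is α-good with respect to H'(n; d_1, d_2, d_3), where 0 < α < 2^{-8}, d_1, d_2, d_3 ≥ 5n/16, d_1 + d_2 + d_3 = n, and n ≥ 10. Then H contains a perfect matching. -/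
/-!
Only the edges of `H'` of type `UUW` are needed. Cut every class `V_i` into consecutive blocks
of sizes `d_i, d_{i+1}, d_{i+2}` (indices mod 3), the first one being `W_i`. For each `j`, the
`j`-th blocks of the three classes span a balanced 3-partite 3-graph `G_j ⊆ H` with parts of size
`m = d_j`, all of whose legal triples are in `H'`; so each vertex of `G_j` misses at most
`B = ⌊α n²⌋` pairs of its link. Perfect matchings of `G_0, G_1, G_2` together form one of `H`.

A perfect matching of `G_j` is grown one edge at a time. Let `T` be a matching of size `k < m`.
If some triple of uncovered vertices is an edge, add it. Otherwise an uncovered vertex misses all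
`(m - k)²` uncovered pairs, so `m - k ≤ √B < n/16` and `k > n/4`. Then for uncovered `a, b, c`
some three edges `p, q, r` of `T` can be traded for the four edges `(a, p₁, q₂)`, `(r₀, b, p₂)`,
`(q₀, r₁, c)`, `(p₀, q₁, r₂)`: each of these four fails to be an edge for at most `k B` ordered
triples `(p, q, r)`, at most `3 k²` triples are degenerate, and `4 k B + 3 k² < k³`.
-/

open Finset

/-- `H'(n; d₁,d₂,d₃)`: the 3-partite 3-graph (edges encoded as functions
`Fin 3 → Fin n`) whose edges are the legal triples of type `UUW` or `UWW`, i.e. those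
meeting `W = W_1 ∪ W_2 ∪ W_3` in exactly one or exactly two vertices, where `W_i`
consists of the first `d i` vertices of class `i`. -/
def H'nd (n : ℕ) (d : Fin 3 → ℕ) : Finset (Fin 3 → Fin n) :=
  Finset.univ.filter (fun e =>
    1 ≤ (Finset.univ.filter (fun i : Fin 3 => (e i : ℕ) < d i)).card ∧
    (Finset.univ.filter (fun i : Fin 3 => (e i : ℕ) < d i)).card ≤ 2)

namespace Tripartite

variable {V : Type*} [DecidableEq V]

abbrev IsMatching (M : Finset (Fin 3 → V)) : Prop :=
  ∀ i, Set.InjOn (fun e : Fin 3 → V => e i) (M : Set (Fin 3 → V))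

def missingLink (E : Finset (Fin 3 → V)) (X : Fin 3 → Finset V) (c : Fin 3) (x : V) :
    Finset (Fin 3 → V) :=
  {e ∈ Fintype.piFinset X | e c = x ∧ e ∉ E}

def switchEdges (v p q r : Fin 3 → V) : Finset (Fin 3 → V) :=
  {![v 0, p 1, q 2], ![r 0, v 1, p 2], ![q 0, r 1, v 2], ![p 0, q 1, r 2]}

def switch (T : Finset (Fin 3 → V)) (v p q r : Fin 3 → V) : Finset (Fin 3 → V) :=
  switchEdges v p q r ∪ (T \ {p, q, r})

variable {T T' E : Finset (Fin 3 → V)} {X : Fin 3 → Finset V} {v p q r : Fin 3 → V}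

lemma IsMatching.of_image_subset (hT : IsMatching T) (hv : ∀ i, v i ∉ T.image (· i))
    (hsub : ∀ i, (insert v T).image (· i) ⊆ T'.image (· i)) (hcard : #T' ≤ #T + 1) :
    IsMatching T' ∧ #T' = #T + 1 := by
  have hlower : ∀ i, #T + 1 ≤ #(T'.image (· i)) := fun i => by
    calc #T + 1 = #((insert v T).image (· i)) := by
          rw [image_insert, card_insert_of_notMem (hv i), card_image_of_injOn (hT i)]
      _ ≤ _ := card_le_card (hsub i)
  have hupper : ∀ i, #(T'.image (· i)) ≤ #T' := fun i => card_image_le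
  exact ⟨fun i => injOn_of_card_image_eq (by linarith [hlower i, hupper i]),
    by linarith [hlower 0, hupper 0]⟩

lemma IsMatching.insert (hT : IsMatching T) (hv : ∀ i, v i ∉ T.image (· i)) :
    IsMatching (insert v T) ∧ #(insert v T) = #T + 1 :=
  hT.of_image_subset hv (fun _ => subset_rfl) (card_insert_le _ _)

lemma IsMatching.biUnion {κ : Type*} (s : Finset κ) {M : κ → Finset (Fin 3 → V)}
    (hM : ∀ j ∈ s, IsMatching (M j)) {f : Fin 3 → V → κ}
    (hf : ∀ j ∈ s, ∀ e ∈ M j, ∀ i, f i (e i) = j) :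
    IsMatching (s.biUnion M) ∧ #(s.biUnion M) = ∑ j ∈ s, #(M j) := by
  have hsame : ∀ j ∈ s, ∀ j' ∈ s, ∀ e ∈ M j, ∀ e' ∈ M j', ∀ i, e i = e' i → j = j' :=
    fun j hj j' hj' e he e' he' i h => by rw [← hf j hj e he i, h, hf j' hj' e' he' i]
  refine ⟨fun i e he e' he' h => ?_, card_biUnion fun j hj j' hj' hne => ?_⟩
  · obtain ⟨j, hj, he⟩ := mem_biUnion.1 he
    obtain ⟨j', hj', he'⟩ := mem_biUnion.1 he'
    obtain rfl := hsame j hj j' hj' e he e' he' i h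
    exact hM j hj i he he' h
  · exact disjoint_left.2 fun e he he' => hne (hsame j hj j' hj' e he e he' 0 rfl)

lemma image_subset_image_switch (i : Fin 3) :
    (insert v T).image (· i) ⊆ (switch T v p q r).image (· i) := by
  intro x hx
  obtain ⟨t, ht, rfl⟩ := mem_image.1 hx
  rw [mem_image]
  by_cases hrest : t ∈ T \ {p, q, r}
  · exact ⟨t, mem_union_right _ hrest, rfl⟩
  have htvpqr : t = v ∨ t = p ∨ t = q ∨ t = r := by
    simp only [mem_insert, mem_sdiff, mem_singleton] at ht hrest
    tauto
  obtain ⟨e, he, hei⟩ : ∃ e ∈ switchEdges v p q r, e i = t i := by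
    rcases htvpqr with rfl | rfl | rfl | rfl <;> fin_cases i <;>
      simp [switchEdges]
  exact ⟨e, mem_union_left _ he, hei⟩

lemma IsMatching.switch (hT : IsMatching T) (hv : ∀ i, v i ∉ T.image (· i)) (hp : p ∈ T)
    (hq : q ∈ T) (hr : r ∈ T) (hpq : p ≠ q) (hpr : p ≠ r) (hqr : q ≠ r) :
    IsMatching (Tripartite.switch T v p q r) ∧ #(Tripartite.switch T v p q r) = #T + 1 := by
  have hpqr : #({p, q, r} : Finset _) = 3 := card_eq_three.2 ⟨p, q, r, hpq, hpr, hqr, rfl⟩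
  have hsub : {p, q, r} ⊆ T := by simp [insert_subset_iff, hp, hq, hr]
  have h3 := card_le_card hsub
  refine hT.of_image_subset hv image_subset_image_switch ?_
  calc #(Tripartite.switch T v p q r) ≤ #(switchEdges v p q r) + #(T \ {p, q, r}) :=
        card_union_le _ _
    _ ≤ 4 + (#T - 3) := by
        gcongr
        · exact card_le_four
        · rw [card_sdiff_of_subset hsub, hpqr]
    _ = #T + 1 := by omega

lemma sum_sum_ite_le_card_missingLink (hT : IsMatching T) (hTX : T ⊆ Fintype.piFinset X)
    (c i j : Fin 3) (hcij : ∀ l, l = c ∨ l = i ∨ l = j) {x : V} (hx : x ∈ X c)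
    (g : (Fin 3 → V) → (Fin 3 → V) → Fin 3 → V)
    (hg : ∀ p q, g p q c = x ∧ g p q i = p i ∧ g p q j = q j) :
    ∑ p ∈ T, ∑ q ∈ T, (if g p q ∉ E then 1 else 0) ≤ #(missingLink E X c x) := by
  rw [← sum_product' T T (fun p q => if g p q ∉ E then 1 else 0), ← card_filter]
  refine card_le_card_of_injOn (fun w => g w.1 w.2) (fun w hw => ?_) (fun w hw w' hw' h => ?_)
  · obtain ⟨hw, hE⟩ := mem_filter.1 hw
    obtain ⟨hp, hq⟩ := mem_product.1 hw
    refine mem_filter.2 ⟨Fintype.mem_piFinset.2 fun l => ?_, (hg _ _).1, hE⟩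
    dsimp only
    rcases hcij l with rfl | rfl | rfl
    · rw [(hg _ _).1]; exact hx
    · rw [(hg _ _).2.1]; exact Fintype.mem_piFinset.1 (hTX hp) _
    · rw [(hg _ _).2.2]; exact Fintype.mem_piFinset.1 (hTX hq) _
  · obtain ⟨hp, hq⟩ := mem_product.1 (mem_filter.1 hw).1
    obtain ⟨hp', hq'⟩ := mem_product.1 (mem_filter.1 hw').1
    have hi := congrFun h i
    have hj := congrFun h j
    simp only [(hg _ _).2.1, (hg _ _).2.2] at hi hj
    exact Prod.ext (hT i hp hp' hi) (hT j hq hq' hj)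

lemma sum_sum_sum_ite_eq_three_mul_card_sq {ι : Type*} [DecidableEq ι] (T : Finset ι) :
    ∑ p ∈ T, ∑ q ∈ T, ∑ r ∈ T,
      ((if p = q then 1 else 0) + (if p = r then 1 else 0) + (if q = r then 1 else 0)) =
      3 * #T ^ 2 := by
  simp [sum_add_distrib, sum_ite_eq]
  ring

lemma sum_sum_sum_switchEdges_notMem_le (hT : IsMatching T) (hTX : T ⊆ Fintype.piFinset X)
    (hv : v ∈ Fintype.piFinset X) {B : ℕ}
    (hmiss : ∀ c, ∀ x ∈ X c, #(missingLink E X c x) ≤ B) :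
    ∑ p ∈ T, ∑ q ∈ T, ∑ r ∈ T,
      ((if ![v 0, p 1, q 2] ∉ E then 1 else 0) + (if ![r 0, v 1, p 2] ∉ E then 1 else 0) +
        (if ![q 0, r 1, v 2] ∉ E then 1 else 0) + (if ![p 0, q 1, r 2] ∉ E then 1 else 0)) ≤
      4 * (#T * B) := by
  have hvX := Fintype.mem_piFinset.1 hv
  have h1 : ∑ p ∈ T, ∑ q ∈ T, ∑ _r ∈ T, (if ![v 0, p 1, q 2] ∉ E then 1 else 0) ≤ #T * B := by
    simp only [sum_const, smul_eq_mul]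
    simp only [← mul_sum]
    exact Nat.mul_le_mul_left _ ((sum_sum_ite_le_card_missingLink hT hTX 0 1 2 (by decide)
      (hvX 0) (fun p q => ![v 0, p 1, q 2]) fun _ _ => ⟨rfl, rfl, rfl⟩).trans (hmiss _ _ (hvX 0)))
  have h2 : ∑ p ∈ T, ∑ _q ∈ T, ∑ r ∈ T, (if ![r 0, v 1, p 2] ∉ E then 1 else 0) ≤ #T * B := by
    simp only [sum_const, smul_eq_mul]
    simp only [← mul_sum]
    exact Nat.mul_le_mul_left _ ((sum_sum_ite_le_card_missingLink hT hTX 1 2 0 (by decide)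
      (hvX 1) (fun p r => ![r 0, v 1, p 2]) fun _ _ => ⟨rfl, rfl, rfl⟩).trans (hmiss _ _ (hvX 1)))
  have h3 : ∑ _p ∈ T, ∑ q ∈ T, ∑ r ∈ T, (if ![q 0, r 1, v 2] ∉ E then 1 else 0) ≤ #T * B := by
    simp only [sum_const, smul_eq_mul]
    exact Nat.mul_le_mul_left _ ((sum_sum_ite_le_card_missingLink hT hTX 2 0 1 (by decide)
      (hvX 2) (fun q r => ![q 0, r 1, v 2]) fun _ _ => ⟨rfl, rfl, rfl⟩).trans (hmiss _ _ (hvX 2)))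
  have h4 : ∑ p ∈ T, ∑ q ∈ T, ∑ r ∈ T, (if ![p 0, q 1, r 2] ∉ E then 1 else 0) ≤ #T * B := by
    rw [← smul_eq_mul, ← sum_const]
    refine sum_le_sum fun p hp => ?_
    have hpX := Fintype.mem_piFinset.1 (hTX hp)
    exact (sum_sum_ite_le_card_missingLink hT hTX 0 1 2 (by decide) (hpX 0)
      (fun q r => ![p 0, q 1, r 2]) fun _ _ => ⟨rfl, rfl, rfl⟩).trans (hmiss _ _ (hpX 0))
  simp only [sum_add_distrib]
  omega

lemma exists_switchEdges_subset (hT : IsMatching T) (hTX : T ⊆ Fintype.piFinset X)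
    (hv : v ∈ Fintype.piFinset X) {B : ℕ}
    (hmiss : ∀ c, ∀ x ∈ X c, #(missingLink E X c x) ≤ B) (hk : 4 * B + 3 * #T < #T ^ 2) :
    ∃ p ∈ T, ∃ q ∈ T, ∃ r ∈ T, p ≠ q ∧ p ≠ r ∧ q ≠ r ∧ switchEdges v p q r ⊆ E := by
  by_contra! hbad
  have hcover : ∀ p ∈ T, ∀ q ∈ T, ∀ r ∈ T, 1 ≤
      ((if p = q then 1 else 0) + (if p = r then 1 else 0) + (if q = r then 1 else 0)) +
      ((if ![v 0, p 1, q 2] ∉ E then 1 else 0) + (if ![r 0, v 1, p 2] ∉ E then 1 else 0) +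
        (if ![q 0, r 1, v 2] ∉ E then 1 else 0) + (if ![p 0, q 1, r 2] ∉ E then 1 else 0)) := by
    intro p hp q hq r hr
    by_cases hpq : p = q; · simp only [hpq, if_true]; omega
    by_cases hpr : p = r; · simp only [hpr, if_true]; omega
    by_cases hqr : q = r; · simp only [hqr, if_true]; omega
    have := hbad p hp q hq r hr hpq hpr hqr
    simp only [switchEdges, insert_subset_iff, singleton_subset_iff, not_and_or] at this
    rcases this with h | h | h | h <;> simp only [h, not_false_eq_true, if_true] <;> omega
  have hsum : #T ^ 3 ≤ _ :=
    calc #T ^ 3 = ∑ p ∈ T, ∑ q ∈ T, ∑ r ∈ T, 1 := by simp; ring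
      _ ≤ _ := sum_le_sum fun p hp => sum_le_sum fun q hq => sum_le_sum fun r hr =>
          hcover p hp q hq r hr
  have hdiag := sum_sum_sum_ite_eq_three_mul_card_sq T
  have hmissing := sum_sum_sum_switchEdges_notMem_le hT hTX hv hmiss
  simp only [sum_add_distrib] at hsum hdiag hmissing
  have hcount : #T ^ 3 ≤ 3 * #T ^ 2 + 4 * (#T * B) := by omega
  nlinarith

lemma switchEdges_subset_piFinset (hv : v ∈ Fintype.piFinset X) (hp : p ∈ Fintype.piFinset X)
    (hq : q ∈ Fintype.piFinset X) (hr : r ∈ Fintype.piFinset X) :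
    switchEdges v p q r ⊆ Fintype.piFinset X := by
  rw [Fintype.mem_piFinset] at hv hp hq hr
  intro e he
  simp only [switchEdges, mem_insert, mem_singleton] at he
  rw [Fintype.mem_piFinset]
  intro i
  rcases he with rfl | rfl | rfl | rfl <;> fin_cases i <;> simp [hv, hp, hq, hr]

lemma exists_isMatching_card_succ {m B : ℕ} (hX : ∀ i, #(X i) = m)
    (hmiss : ∀ c, ∀ x ∈ X c, #(missingLink E X c x) ≤ B)
    (harith : ∀ k < m, (m - k) ^ 2 ≤ B → 4 * B + 3 * k < k ^ 2)
    (hT : IsMatching T) (hTE : T ⊆ E ∩ Fintype.piFinset X) (hk : #T < m) :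
    ∃ T' ⊆ E ∩ Fintype.piFinset X, IsMatching T' ∧ #T' = #T + 1 := by
  have hTX : T ⊆ Fintype.piFinset X := hTE.trans inter_subset_right
  set U : Fin 3 → Finset V := fun i => X i \ T.image (· i)
  have hUcard : ∀ i, m - #T ≤ #(U i) := fun i =>
    calc m - #T ≤ #(X i) - #(T.image (· i)) := by
          have := card_image_le (s := T) (f := (· i)); rw [hX]; omega
      _ ≤ #(U i) := le_card_sdiff _ _
  have hUX : Fintype.piFinset U ⊆ Fintype.piFinset X :=
    Fintype.piFinset_subset _ _ fun _ => sdiff_subset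
  have huncov : ∀ w ∈ Fintype.piFinset U, ∀ i, w i ∉ T.image (· i) :=
    fun w hw i => (mem_sdiff.1 (Fintype.mem_piFinset.1 hw i)).2
  by_cases hext : ∃ w ∈ Fintype.piFinset U, w ∈ E
  · obtain ⟨w, hwU, hwE⟩ := hext
    exact ⟨insert w T, insert_subset (mem_inter.2 ⟨hwE, hUX hwU⟩) hTE, hT.insert (huncov w hwU)⟩
  push Not at hext
  obtain ⟨v, hv⟩ : (Fintype.piFinset U).Nonempty :=
    Fintype.piFinset_nonempty.2 fun i => card_pos.1 (by have := hUcard i; omega)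
  have hsq : (m - #T) ^ 2 ≤ B :=
    calc (m - #T) ^ 2 ≤ ∏ j ∈ univ.erase 0, #(U j) := by
          simpa using pow_card_le_prod (univ.erase (0 : Fin 3)) (fun j => #(U j)) (m - #T)
            fun j _ => hUcard j
      _ = #{w ∈ Fintype.piFinset U | w 0 = v 0} :=
          (Fintype.card_filter_piFinset_eq_of_mem U 0 (Fintype.mem_piFinset.1 hv 0)).symm
      _ ≤ #(missingLink E X 0 (v 0)) := card_le_card fun w hw => by
          obtain ⟨hwU, hw0⟩ := mem_filter.1 hw
          exact mem_filter.2 ⟨hUX hwU, hw0, hext w hwU⟩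
      _ ≤ B := hmiss 0 _ (Fintype.mem_piFinset.1 (hUX hv) 0)
  obtain ⟨p, hp, q, hq, r, hr, hpq, hpr, hqr, hE⟩ :=
    exists_switchEdges_subset hT hTX (hUX hv) hmiss (harith _ hk hsq)
  refine ⟨switch T v p q r, union_subset ?_ (sdiff_subset.trans hTE),
    hT.switch (huncov v hv) hp hq hr hpq hpr hqr⟩
  exact subset_inter hE (switchEdges_subset_piFinset (hUX hv) (hTX hp) (hTX hq) (hTX hr))

theorem exists_isMatching_card_eq {m B : ℕ} (hX : ∀ i, #(X i) = m)
    (hmiss : ∀ c, ∀ x ∈ X c, #(missingLink E X c x) ≤ B)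
    (harith : ∀ k < m, (m - k) ^ 2 ≤ B → 4 * B + 3 * k < k ^ 2) :
    ∃ M ⊆ E ∩ Fintype.piFinset X, IsMatching M ∧ #M = m := by
  suffices ∀ k ≤ m, ∃ M ⊆ E ∩ Fintype.piFinset X, IsMatching M ∧ #M = k from this m le_rfl
  intro k hk
  induction k with
  | zero => exact ⟨∅, empty_subset _, fun i => by simp, card_empty⟩
  | succ k ih =>
    obtain ⟨T, hTE, hT, rfl⟩ := ih (by omega)
    exact exists_isMatching_card_succ hX hmiss harith hT hTE hk

end Tripartite

lemma four_mul_add_lt_sq {n m k B : ℕ} (hB : 256 * B < n ^ 2) (hm : 5 * n ≤ 16 * m)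
    (hk : k < m) (h : (m - k) ^ 2 ≤ B) : 4 * B + 3 * k < k ^ 2 := by
  obtain ⟨j, rfl⟩ : ∃ j, m = k + j := ⟨m - k, by omega⟩
  have hj : 1 ≤ j := by omega
  rw [Nat.add_sub_cancel_left] at h
  have hjn : 16 * j < n := by nlinarith
  have hkn : n < 4 * k := by omega
  nlinarith

lemma four_mul_floor_add_lt_sq {α : ℝ} (hα : α < 2 ^ (-8 : ℤ)) {n m k : ℕ}
    (hm : (5 : ℝ) * n / 16 ≤ m) (hk : k < m) (h : (m - k) ^ 2 ≤ ⌊α * n ^ 2⌋₊) :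
    4 * ⌊α * n ^ 2⌋₊ + 3 * k < k ^ 2 := by
  have hpos : 1 ≤ α * n ^ 2 :=
    Nat.floor_pos.1 (lt_of_lt_of_le (pow_pos (Nat.sub_pos_of_lt hk) 2) h)
  have hB : 256 * ⌊α * n ^ 2⌋₊ < n ^ 2 := by
    have hfl := Nat.floor_le (by linarith : 0 ≤ α * n ^ 2)
    have hα' : α < 1 / 256 := by norm_num at hα; linarith
    have hn : (0 : ℝ) < n ^ 2 := by
      have : n ≠ 0 := by rintro rfl; norm_num at hpos
      positivity
    exact_mod_cast (by nlinarith : (256 : ℝ) * ⌊α * n ^ 2⌋₊ < n ^ 2)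
  exact four_mul_add_lt_sq hB (by exact_mod_cast (by linarith : (5 : ℝ) * n ≤ 16 * m)) hk h

def blockOf {n : ℕ} (d : Fin 3 → ℕ) (i : Fin 3) (v : Fin n) : Fin 3 :=
  if (v : ℕ) < d i then i else if (v : ℕ) < d i + d (i + 1) then i + 1 else i + 2

section Blocks

variable {n : ℕ} {d : Fin 3 → ℕ}

lemma blockOf_eq_self_iff {i : Fin 3} {v : Fin n} : blockOf d i v = i ↔ (v : ℕ) < d i := by
  unfold blockOf
  split_ifs with h1 h2 <;> simp [h1]

lemma mem_H'nd_of_forall_blockOf_eq {e : Fin 3 → Fin n} {j : Fin 3}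
    (he : ∀ i, blockOf d i (e i) = j) : e ∈ H'nd n d := by
  have : univ.filter (fun i => (e i : ℕ) < d i) = {j} := by
    ext i
    simp [← blockOf_eq_self_iff, he, eq_comm]
  simp [H'nd, this]

lemma card_filter_le_val_and_val_lt {a b : ℕ} (hab : a ≤ b) (hbn : b ≤ n) :
    #{v : Fin n | a ≤ (v : ℕ) ∧ (v : ℕ) < b} = b - a := by
  have : univ.filter (fun v : Fin n => a ≤ (v : ℕ) ∧ (v : ℕ) < b) =
      univ.filter (fun v : Fin n => (v : ℕ) < b) \ univ.filter (fun v : Fin n => (v : ℕ) < a) := by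
    ext; simp; omega
  rw [this, card_sdiff_of_subset (fun v => by simp; omega), Fin.card_filter_val_lt,
    Fin.card_filter_val_lt]
  omega

lemma card_filter_blockOf_eq (hsum : d 0 + d 1 + d 2 = n) (i j : Fin 3) :
    #{v : Fin n | blockOf d i v = j} = d j := by
  have hcyc : d i + d (i + 1) + d (i + 2) = n := by fin_cases i <;> simp <;> omega
  obtain ⟨t, rfl⟩ : ∃ t, j = i + t := ⟨j - i, by abel⟩
  have hinterval : ∀ lo hi, lo ≤ hi → hi ≤ n → hi - lo = d (i + t) →
      (∀ v : Fin n, blockOf d i v = i + t ↔ lo ≤ (v : ℕ) ∧ (v : ℕ) < hi) →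
      #{v : Fin n | blockOf d i v = i + t} = d (i + t) := by
    intro lo hi hlo hhi hlen hiff
    rw [filter_congr fun v _ => hiff v, card_filter_le_val_and_val_lt hlo hhi, hlen]
  fin_cases t
  · refine hinterval 0 (d i) (by omega) (by omega) (by simp) fun v => ?_
    unfold blockOf; split_ifs <;> simp <;> omega
  · refine hinterval (d i) (d i + d (i + 1)) (by omega) (by omega) (by simp) fun v => ?_
    unfold blockOf; split_ifs <;> simp <;> omega
  · refine hinterval (d i + d (i + 1)) n (by omega) le_rfl (by simp; omega) fun v => ?_
    unfold blockOf; split_ifs <;> simp <;> omega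

end Blocks

theorem perfect_matching_of_alpha_good_general (n : ℕ) (α : ℝ)
    (hα1 : α < 2 ^ (-8 : ℤ)) (d : Fin 3 → ℕ)
    (hd : ∀ i, (5 : ℝ) * n / 16 ≤ d i) (hsum : d 0 + d 1 + d 2 = n)
    (H : Finset (Fin 3 → Fin n))
    (hgood : ∀ (c : Fin 3) (x : Fin n),
      ((((H'nd n d).filter (fun e => e c = x)) \ H).card : ℝ) ≤ α * n ^ 2) :
    ∃ M : Finset (Fin 3 → Fin n), M ⊆ H ∧
      (∀ e ∈ M, ∀ f ∈ M, e ≠ f → ∀ i, e i ≠ f i) ∧ M.card = n := by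
  let X (j : Fin 3) (i : Fin 3) : Finset (Fin n) := {v | blockOf d i v = j}
  have hmissing : ∀ j c x, Tripartite.missingLink H (X j) c x ⊆ ((H'nd n d).filter (· c = x)) \ H :=
    fun j c x e he => by
      obtain ⟨heX, hec, heH⟩ := mem_filter.1 he
      have hblock : ∀ i, blockOf d i (e i) = j := fun i =>
        (mem_filter.1 (Fintype.mem_piFinset.1 heX i)).2
      exact mem_sdiff.2 ⟨mem_filter.2 ⟨mem_H'nd_of_forall_blockOf_eq hblock, hec⟩, heH⟩
  have hmatch : ∀ j, ∃ M ⊆ H ∩ Fintype.piFinset (X j), Tripartite.IsMatching M ∧ #M = d j :=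
    fun j => Tripartite.exists_isMatching_card_eq (B := ⌊α * n ^ 2⌋₊)
      (fun i => card_filter_blockOf_eq hsum i j)
      (fun c x _ => Nat.le_floor
        ((Nat.cast_le.2 (card_le_card (hmissing j c x))).trans (hgood c x)))
      (fun _ hk hsq => four_mul_floor_add_lt_sq hα1 (hd j) hk hsq)
  choose M hMH hM hMcard using hmatch
  have hblock : ∀ j ∈ univ, ∀ e ∈ M j, ∀ i, blockOf d i (e i) = j := fun j _ e he i =>
    (mem_filter.1 (Fintype.mem_piFinset.1 (mem_inter.1 (hMH j he)).2 i)).2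
  obtain ⟨hmatching, hcard⟩ := Tripartite.IsMatching.biUnion univ (fun j _ => hM j) hblock
  refine ⟨univ.biUnion M, biUnion_subset.2 fun j _ => (hMH j).trans inter_subset_left,
    fun e he f hf hef i hi => hef (hmatching i he hf hi), ?_⟩
  rw [hcard, Fin.sum_univ_three, hMcard, hMcard, hMcard, hsum]

/-- Let `0 < α < 2⁻⁸`, `n ≥ 10` and `d₁,d₂,d₃ ≥ 5n/16` with `d₁+d₂+d₃ = n`. If every
vertex of the 3-partite 3-graph `H` is `α`-good with respect to `H'(n;d₁,d₂,d₃)`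
(i.e. at most `α·n²` pairs in its link in `H'(n;d₁,d₂,d₃)` are missing from its link in
`H`), then `H` contains a perfect matching. -/
theorem perfect_matching_of_alpha_good (n : ℕ) (hn : 10 ≤ n) (α : ℝ)
    (hα0 : 0 < α) (hα1 : α < 2 ^ (-8 : ℤ)) (d : Fin 3 → ℕ)
    (hd : ∀ i, (5 : ℝ) * n / 16 ≤ d i) (hsum : d 0 + d 1 + d 2 = n)
    (H : Finset (Fin 3 → Fin n))
    (hgood : ∀ (c : Fin 3) (x : Fin n),
      ((((H'nd n d).filter (fun e => e c = x)) \ H).card : ℝ) ≤ α * n ^ 2) :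
    ∃ M : Finset (Fin 3 → Fin n), M ⊆ H ∧
      (∀ e ∈ M, ∀ f ∈ M, e ≠ f → ∀ i, e i ≠ f i) ∧ M.card = n :=
  perfect_matching_of_alpha_good_general n α hα1 d hd hsum H hgood
end
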